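/- Telescoped consensus bound: Let W ∈ ℝ^{N×N} be symmetric, entrywise nonnegative and doubly stochastic, with eigenvalues 1 = λ₁ > λ₂ ≥ … ≥ λ_N > −1, and set λ := max(|λ₂|,|λ_N|) ∈ [0,1). Let J be the N×N all-ones matrix. Let e^{(1)},…,e^{(T)} ∈ ℝ^N be arbitrary, let x^{(0)} ∈ ℝ^N have all entries equal, and define recursively x^{(t)} = W x^{(t−1)} + e^{(t)} and x̄^{(t)} = (1/N)J x^{(t)} for t = 1,…,T. Then ((1−λ²)/2) · Σ_{t=1}^T ‖x^{(t−1)} − x̄^{(t−1)}‖₂² ≤ ((1+λ²)/(1−λ²)) · Σ_{t=1}^T ‖e^{(t)}‖₂². -/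

import Mathlib

/-! The deviation `y_t = x_t - x̄_t` from the average satisfies
`y_{t+1} = W y_t + (e_{t+1} - ē_{t+1})`, because `W` fixes the all-ones vector `1` and preserves
sums. Every eigenvalue other than the top one has modulus at most `λ < 1`, so its eigenvectors are
orthogonal to the fixed vector `1`; hence `1` spans the top eigenvector, and `W` contracts vectors
orthogonal to `1` by the factor `λ`. This gives `‖y_{t+1}‖ ≤ λ ‖y_t‖ + ‖e_{t+1}‖`; Young's
inequality turns it into `‖y_{t+1}‖² ≤ (1+λ²)/2 ‖y_t‖² + (1+λ²)/(1-λ²) ‖e_{t+1}‖²`, and summing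
over `t` telescopes because `y_0 = 0`. -/

open Finset Matrix Polynomial

theorem Antitone.eq_of_prod_X_sub_C_eq {R : Type*} [CommRing R] [IsDomain R] [LinearOrder R]
    {n : ℕ} {f g : Fin n → R} (hf : Antitone f) (hg : Antitone g)
    (h : ∏ i, (X - C (f i)) = ∏ i, (X - C (g i))) : f = g := by
  have hroots (k : Fin n → R) : (∏ i, (X - C (k i))).roots = ↑(List.ofFn k) := by
    rw [Polynomial.roots_prod _ _ (prod_ne_zero_iff.mpr fun i _ => X_sub_C_ne_zero (k i))]
    simp [Fin.univ_val_map]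
  have hperm : (List.ofFn f).Perm (List.ofFn g) :=
    Multiset.coe_eq_coe.mp (by rw [← hroots, ← hroots, h])
  exact List.ofFn_injective (hperm.eq_of_sortedGE hf.sortedGE_ofFn hg.sortedGE_ofFn)

theorem Antitone.abs_le_max_abs {α : Type*} [Preorder α] {f : α → ℝ} (hf : Antitone f)
    {a b i : α} (hai : a ≤ i) (hib : i ≤ b) : |f i| ≤ max |f a| |f b| :=
  (abs_le_max_abs_abs (hf hib) (hf hai)).trans_eq (max_comm _ _)

theorem sq_mul_add_le {lam : ℝ} (hlam : lam ^ 2 < 1) (a b : ℝ) :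
    (lam * a + b) ^ 2 ≤ (1 + lam ^ 2) / 2 * a ^ 2 + (1 + lam ^ 2) / (1 - lam ^ 2) * b ^ 2 := by
  -- Young's inequality `2 lam a b ≤ (1 - lam²) / 2 * a² + 2 lam² / (1 - lam²) * b²`
  have h : 0 < 1 - lam ^ 2 := by linarith
  rw [div_mul_eq_mul_div, div_mul_eq_mul_div, div_add_div _ _ two_ne_zero h.ne',
    le_div_iff₀ (by positivity)]
  nlinarith [sq_nonneg ((1 - lam ^ 2) * a - 2 * lam * b)]

theorem mul_sum_range_le_sum_Icc_of_le_mul_add {Q b : ℕ → ℝ} {a : ℝ} (hQ0 : Q 0 = 0)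
    (hQ : ∀ t, 0 ≤ Q t) (hstep : ∀ t, Q (t + 1) ≤ a * Q t + b (t + 1)) (T : ℕ) :
    (1 - a) * ∑ t ∈ range T, Q t ≤ ∑ t ∈ Icc 1 T, b t := by
  have hshift : ∑ t ∈ range T, b (t + 1) = ∑ t ∈ Icc 1 T, b t := by
    rw [range_eq_Ico, sum_Ico_add', Ico_add_one_right_eq_Icc, zero_add]
  have htel : ∑ t ∈ range T, Q t ≤ ∑ t ∈ range T, Q (t + 1) := by
    linarith [sum_range_succ' Q T, sum_range_succ Q T, hQ T]
  have hsum : ∑ t ∈ range T, Q (t + 1) ≤ a * ∑ t ∈ range T, Q t + ∑ t ∈ range T, b (t + 1) := by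
    rw [mul_sum, ← sum_add_distrib]
    exact sum_le_sum fun t _ => hstep t
  linarith

theorem LinearMap.IsSymmetric.eigenvalues_eq_of_charpoly_eq {𝕜 E : Type*} [RCLike 𝕜]
    [NormedAddCommGroup E] [InnerProductSpace 𝕜 E] [FiniteDimensional 𝕜 E] {T : E →ₗ[𝕜] E}
    {n : ℕ} (hT : T.IsSymmetric) (hn : Module.finrank 𝕜 E = n) {μ : Fin n → ℝ}
    (hμ : Antitone μ) (h : T.charpoly = ∏ i, (X - C (μ i : 𝕜))) : hT.eigenvalues hn = μ := by
  have hmap (k : Fin n → ℝ) :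
      ∏ i, (X - C (k i : 𝕜)) = (∏ i, (X - C (k i))).map (algebraMap ℝ 𝕜) := by
    simp [Polynomial.map_prod]
  refine (hT.eigenvalues_antitone hn).eq_of_prod_X_sub_C_eq hμ
    (Polynomial.map_injective _ (algebraMap ℝ 𝕜).injective ?_)
  rw [← hmap, ← hmap, ← hT.charpoly_eq hn, h]

section SpectralGap

open scoped RealInnerProductSpace

variable {E ι : Type*} [NormedAddCommGroup E] [InnerProductSpace ℝ E] [Fintype ι]
  {T : E →ₗ[ℝ] E}

theorem LinearMap.IsSymmetric.inner_eq_zero_of_apply_eq_smul (hT : T.IsSymmetric) {x y : E}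
    {μ ν : ℝ} (hx : T x = μ • x) (hy : T y = ν • y) (hμν : μ ≠ ν) : ⟪x, y⟫ = 0 := by
  have h : μ * ⟪x, y⟫ = ν * ⟪x, y⟫ := by
    rw [← real_inner_smul_left, ← hx, hT, hy, real_inner_smul_right]
  exact (mul_eq_mul_right_iff.mp h).resolve_left hμν

theorem OrthonormalBasis.inner_eq_zero_of_forall_ne (b : OrthonormalBasis ι ℝ E) {i₀ : ι}
    {u v : E} (hu : u ≠ 0) (hbu : ∀ i ≠ i₀, ⟪b i, u⟫ = 0) (huv : ⟪u, v⟫ = 0) :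
    ⟪b i₀, v⟫ = 0 := by
  have hu' : u = ⟪b i₀, u⟫ • b i₀ := by
    conv_lhs => rw [← b.sum_repr' u]
    exact sum_eq_single i₀ (fun i _ hi => by rw [hbu i hi, zero_smul]) (by simp)
  have hc : ⟪b i₀, u⟫ ≠ 0 := fun h => hu (by rw [hu', h, zero_smul])
  rw [hu', real_inner_smul_left] at huv
  exact (mul_eq_zero.mp huv).resolve_left hc

theorem LinearMap.IsSymmetric.norm_apply_le_of_forall_inner_eq_zero (hT : T.IsSymmetric)
    (b : OrthonormalBasis ι ℝ E) {μ : ι → ℝ} (hb : ∀ i, T (b i) = μ i • b i) {lam : ℝ}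
    (hlam : 0 ≤ lam) {v : E} (hv : ∀ i, lam < |μ i| → ⟪b i, v⟫ = 0) :
    ‖T v‖ ≤ lam * ‖v‖ := by
  have hcoef (i : ι) : ⟪b i, T v⟫ = μ i * ⟪b i, v⟫ := by
    rw [← hT, hb, real_inner_smul_left]
  have hsq : ‖T v‖ ^ 2 ≤ (lam * ‖v‖) ^ 2 := by
    rw [← b.sum_sq_inner_right, mul_pow, ← b.sum_sq_inner_right, mul_sum]
    refine sum_le_sum fun i _ => ?_
    rw [hcoef, mul_pow]
    by_cases hi : lam < |μ i|
    · simp [hv i hi]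
    · have hμi := abs_le.mp (not_lt.mp hi)
      exact mul_le_mul_of_nonneg_right (sq_le_sq' hμi.1 hμi.2) (sq_nonneg _)
  exact (pow_le_pow_iff_left₀ (norm_nonneg _) (by positivity) two_ne_zero).mp hsq

theorem LinearMap.IsSymmetric.norm_apply_le_of_inner_fixed_eq_zero (hT : T.IsSymmetric)
    (b : OrthonormalBasis ι ℝ E) {μ : ι → ℝ} (hb : ∀ i, T (b i) = μ i • b i) {i₀ : ι}
    {lam : ℝ} (hlam0 : 0 ≤ lam) (hlam1 : lam < 1) (hμ : ∀ i ≠ i₀, |μ i| ≤ lam) {u v : E}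
    (hu0 : u ≠ 0) (hu : T u = u) (huv : ⟪u, v⟫ = 0) : ‖T v‖ ≤ lam * ‖v‖ := by
  refine hT.norm_apply_le_of_forall_inner_eq_zero b hb hlam0 fun i hi => ?_
  obtain rfl : i = i₀ := by_contra fun h => (hμ i h).not_gt hi
  refine b.inner_eq_zero_of_forall_ne hu0 (fun j hj => ?_) huv
  refine hT.inner_eq_zero_of_apply_eq_smul (hb j) (hu.trans (one_smul ℝ u).symm) fun h => ?_
  linarith [hμ j hj, h ▸ abs_one (α := ℝ)]

end SpectralGap

namespace Consensus

variable {N : ℕ}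

noncomputable def center (v : Fin N → ℝ) : Fin N → ℝ := fun i => v i - (N : ℝ)⁻¹ * ∑ j, v j

theorem sum_center (v : Fin N → ℝ) : ∑ i, center v i = 0 := by
  rcases N.eq_zero_or_pos with rfl | hN
  · simp
  · simp only [center, sum_sub_distrib, sum_const, card_univ, Fintype.card_fin, nsmul_eq_mul]
    field_simp
    ring

theorem sum_sq_center_le (v : Fin N → ℝ) : ∑ i, center v i ^ 2 ≤ ∑ i, v i ^ 2 := by
  obtain ⟨m, hm⟩ : ∃ m, ∀ i, center v i = v i - m := ⟨_, fun _ => rfl⟩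
  calc ∑ i, center v i ^ 2 ≤ ∑ i, center v i ^ 2 + N * m ^ 2 :=
        le_add_of_nonneg_right (by positivity)
    _ = ∑ i, (center v i ^ 2 + 2 * m * center v i + m ^ 2) := by
        rw [sum_add_distrib, sum_add_distrib, ← mul_sum, sum_center, sum_const, card_univ,
          Fintype.card_fin, nsmul_eq_mul]
        ring
    _ = ∑ i, v i ^ 2 := sum_congr rfl fun i _ => by rw [hm]; ring

theorem center_eq_zero_of_forall_eq {v : Fin N → ℝ} (hv : ∀ i j, v i = v j) : center v = 0 := by
  funext i
  have hN : (N : ℝ) ≠ 0 := Nat.cast_ne_zero.mpr i.pos.ne'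
  simp [center, sum_congr rfl fun j _ => hv j i, hN]

theorem center_add (v w : Fin N → ℝ) : center (v + w) = center v + center w := by
  funext i
  simp only [center, Pi.add_apply, sum_add_distrib]
  ring

theorem center_mulVec {W : Matrix (Fin N) (Fin N) ℝ} (hrow : ∀ i, ∑ j, W i j = 1)
    (hcol : ∀ j, ∑ i, W i j = 1) (v : Fin N → ℝ) : center (W *ᵥ v) = W *ᵥ center v := by
  have hsum : ∑ i, ∑ j, W i j * v j = ∑ j, v j := by
    rw [sum_comm]
    simp only [← sum_mul, hcol, one_mul]
  funext i
  simp only [center, mulVec, dotProduct, mul_sub, sum_sub_distrib, ← sum_mul, hrow, one_mul, hsum]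

theorem sum_sq_eq_norm_sq (v : Fin N → ℝ) :
    ∑ i, v i ^ 2 = ‖(WithLp.toLp 2 v : EuclideanSpace ℝ (Fin N))‖ ^ 2 :=
  (EuclideanSpace.real_norm_sq_eq _).symm

open scoped RealInnerProductSpace in
theorem norm_toEuclideanLin_le_of_sum_eq_zero {W : Matrix (Fin N) (Fin N) ℝ} (hWsymm : W.IsSymm)
    (hrow : ∀ i, ∑ j, W i j = 1) {eig : Fin N → ℝ}
    (heig : W.charpoly = ∏ i, (X - C (eig i))) (hanti : Antitone eig) {i₀ : Fin N} {lam : ℝ}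
    (hlam0 : 0 ≤ lam) (hlam1 : lam < 1) (hbound : ∀ i ≠ i₀, |eig i| ≤ lam)
    (v : EuclideanSpace ℝ (Fin N)) (hv : ∑ i, v i = 0) : ‖toEuclideanLin W v‖ ≤ lam * ‖v‖ := by
  have hT : (toEuclideanLin W).IsSymmetric :=
    isSymmetric_toEuclideanLin_iff.mpr (isHermitian_iff_isSymm.mpr hWsymm)
  have hn : Module.finrank ℝ (EuclideanSpace ℝ (Fin N)) = N := finrank_euclideanSpace_fin
  have heigT : hT.eigenvalues hn = eig :=
    hT.eigenvalues_eq_of_charpoly_eq hn hanti (by simpa [toLpLin_eq_toLin] using heig)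
  let u : EuclideanSpace ℝ (Fin N) := WithLp.toLp 2 fun _ => 1
  have hu0 : u ≠ 0 := fun h => one_ne_zero (congrArg (· i₀) h)
  have hu : toEuclideanLin W u = u := by
    ext i
    simp [u, mulVec, dotProduct, hrow]
  have huv : ⟪u, v⟫ = 0 := by simpa [u, PiLp.inner_apply] using hv
  refine hT.norm_apply_le_of_inner_fixed_eq_zero (hT.eigenvectorBasis hn) (fun i => ?_) hlam0
    hlam1 hbound hu0 hu huv
  rw [hT.apply_eigenvectorBasis, heigT]
  rfl

theorem sum_sq_center_mulVec_add_le {W : Matrix (Fin N) (Fin N) ℝ}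
    (hrow : ∀ i, ∑ j, W i j = 1) (hcol : ∀ j, ∑ i, W i j = 1) {lam : ℝ} (hlam : lam ^ 2 < 1)
    (hgap : ∀ v : EuclideanSpace ℝ (Fin N), ∑ i, v i = 0 → ‖toEuclideanLin W v‖ ≤ lam * ‖v‖)
    (v w : Fin N → ℝ) :
    ∑ i, center (W *ᵥ v + w) i ^ 2
      ≤ (1 + lam ^ 2) / 2 * ∑ i, center v i ^ 2
        + (1 + lam ^ 2) / (1 - lam ^ 2) * ∑ i, w i ^ 2 := by
  simp only [sum_sq_eq_norm_sq]
  have hw : ‖(WithLp.toLp 2 (center w) : EuclideanSpace ℝ (Fin N))‖ ≤ ‖WithLp.toLp 2 w‖ := by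
    have := sum_sq_center_le w
    rw [sum_sq_eq_norm_sq, sum_sq_eq_norm_sq] at this
    exact (pow_le_pow_iff_left₀ (norm_nonneg _) (norm_nonneg _) two_ne_zero).mp this
  have hnorm : ‖(WithLp.toLp 2 (center (W *ᵥ v + w)) : EuclideanSpace ℝ (Fin N))‖
      ≤ lam * ‖WithLp.toLp 2 (center v)‖ + ‖WithLp.toLp 2 w‖ := by
    have hv := hgap (WithLp.toLp 2 (center v)) (sum_center v)
    rw [toLpLin_toLp, toLin'_apply] at hv
    rw [center_add, center_mulVec hrow hcol, WithLp.toLp_add]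
    exact (norm_add_le _ _).trans (add_le_add hv hw)
  calc _ ≤ (lam * ‖WithLp.toLp 2 (center v)‖ + ‖WithLp.toLp 2 w‖) ^ 2 :=
        pow_le_pow_left₀ (norm_nonneg _) hnorm 2
    _ ≤ _ := sq_mul_add_le hlam _ _

end Consensus

open Consensus in
/-- Telescoped consensus bound: for a symmetric, nonnegative, doubly stochastic mixing matrix `W`
with eigenvalues `1 = λ₁ > λ₂ ≥ … ≥ λ_N > −1`, `λ = max(|λ₂|,|λ_N|)`, and iterates
`x^{(t)} = W x^{(t−1)} + e^{(t)}` started from a consensual `x^{(0)}`,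
`((1−λ²)/2) Σ_{t=1}^T ‖x^{(t−1)} − x̄^{(t−1)}‖₂² ≤ ((1+λ²)/(1−λ²)) Σ_{t=1}^T ‖e^{(t)}‖₂²`. -/
theorem telescoped_consensus_bound
    (N : ℕ) (hN : 1 < N)
    (W : Matrix (Fin N) (Fin N) ℝ)
    (hWsymm : W.IsSymm)
    (hWrow : ∀ i, ∑ j, W i j = 1)
    (hWcol : ∀ j, ∑ i, W i j = 1)
    (eig : Fin N → ℝ)
    (heig : W.charpoly = ∏ i, (Polynomial.X - Polynomial.C (eig i)))
    (hanti : Antitone eig)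
    (heig2 : eig ⟨1, hN⟩ < 1)
    (heiglast : -1 < eig ⟨N - 1, by omega⟩)
    (lam : ℝ) (hlam : lam = max |eig ⟨1, hN⟩| |eig ⟨N - 1, by omega⟩|)
    (T : ℕ)
    (e : ℕ → Fin N → ℝ)
    (x : ℕ → Fin N → ℝ)
    (hx0 : ∀ i j, x 0 i = x 0 j)
    (hxrec : ∀ t : ℕ, x (t + 1) = W.mulVec (x t) + e (t + 1)) :
    ((1 - lam ^ 2) / 2)
        * ∑ t ∈ Finset.range T, ∑ i, (x t i - (N : ℝ)⁻¹ * ∑ j, x t j) ^ 2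
      ≤ ((1 + lam ^ 2) / (1 - lam ^ 2)) * ∑ t ∈ Finset.Icc 1 T, ∑ i, (e t i) ^ 2 := by
  have hlast : eig ⟨N - 1, by omega⟩ ≤ eig ⟨1, hN⟩ := hanti (Fin.mk_le_mk.mpr (by omega))
  have hlam0 : 0 ≤ lam := hlam ▸ (abs_nonneg _).trans (le_max_left _ _)
  have hlam1 : lam < 1 :=
    hlam ▸ max_lt (abs_lt.mpr ⟨by linarith, heig2⟩) (abs_lt.mpr ⟨heiglast, by linarith⟩)
  have hbound : ∀ i ≠ (⟨0, by omega⟩ : Fin N), |eig i| ≤ lam := fun i hi =>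
    hlam ▸ hanti.abs_le_max_abs (Fin.le_iff_val_le_val.mpr (Nat.one_le_iff_ne_zero.mpr
      fun h => hi (Fin.ext h))) (Fin.le_iff_val_le_val.mpr (Nat.le_sub_one_of_lt i.isLt))
  have hgap := norm_toEuclideanLin_le_of_sum_eq_zero hWsymm hWrow heig hanti hlam0 hlam1 hbound
  have hstep (t : ℕ) : ∑ i, center (x (t + 1)) i ^ 2 ≤ (1 + lam ^ 2) / 2 * ∑ i, center (x t) i ^ 2
      + (1 + lam ^ 2) / (1 - lam ^ 2) * ∑ i, e (t + 1) i ^ 2 := by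
    rw [hxrec]
    exact sum_sq_center_mulVec_add_le hWrow hWcol (by nlinarith) hgap _ _
  have hQ0 : ∑ i, center (x 0) i ^ 2 = 0 := by simp [center_eq_zero_of_forall_eq hx0]
  have key := mul_sum_range_le_sum_Icc_of_le_mul_add (Q := fun t => ∑ i, center (x t) i ^ 2)
    (b := fun t => (1 + lam ^ 2) / (1 - lam ^ 2) * ∑ i, e t i ^ 2) hQ0 (fun t => by positivity)
    hstep T
  rw [← mul_sum] at key
  refine le_of_eq_of_le ?_ key
  change _ * ∑ t ∈ range T, ∑ i, center (x t) i ^ 2 = _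
  ring
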